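/- arXiv:2401.13145 — 5 statements merged into one kernel-verified Lean document; each statement's English description precedes it below -/
import Mathlib

section
/- Let 𝔽 be a finite Boolean subalgebra of Bor(C) and t ∈ ℕ such that every element of 𝔽 is (t,ε)-balanced, where ε = (1/100)·inf{λ(A) : A ∈ 𝔽, λ(A) > 0}. Then for every A ∈ 𝔽 with λ(A) > 0 there exists s_A ∈ {-1,1}^t such that λ(A ∩ ⟨s_A⟩)/λ(⟨s_A⟩) ≥ 0.99. -/
open MeasureTheory Set Filter Topology
open scoped ENNReal

noncomputable section

/-- The Cantor set `{-1,1}^ℕ`, coded with `Bool` (`true ↔ 1`, `false ↔ -1`). -/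
abbrev Cantor : Type := ℕ → Bool

/-- `δ_n(x) = x_n ∈ {-1,1}`. -/
def delta (n : ℕ) (x : Cantor) : ℝ := if x n then 1 else -1

/-- The cylinder `⟨s⟩ = {x : x↾m = s}`. -/
def cyl {m : ℕ} (s : Fin m → Bool) : Set Cantor := {x | ∀ i : Fin m, x i.1 = s i}

/-- `φ_n(A) = ∫_A δ_n dμ`. -/
def phi (μ : Measure Cantor) (n : ℕ) (A : Set Cantor) : ℝ := ∫ x in A, delta n x ∂μ

/-- `μ` is the Haar (fair-coin product) measure on the Cantor set:
every cylinder of length `m` has measure `2^{-m}`. -/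
def IsHaar (μ : Measure Cantor) : Prop :=
  ∀ (m : ℕ) (s : Fin m → Bool), μ (cyl s) = (2 : ℝ≥0∞)⁻¹ ^ m

/-- `A` is `(t,ε)`-semibalanced: `|φ_r(A)| < ε/r` for all `r > t`. -/
def Semibalanced (μ : Measure Cantor) (t : ℕ) (ε : ℝ) (A : Set Cantor) : Prop :=
  ∀ r : ℕ, t < r → |phi μ r A| < ε / (r : ℝ)

/-- `A` is `(m,ε)`-balanced. -/
def BalancedAt (μ : Measure Cantor) (m : ℕ) (ε : ℝ) (A : Set Cantor) : Prop :=
  ∀ s : Fin m → Bool,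
    ((μ (A ∩ cyl s)).toReal / (μ (cyl s)).toReal < ε / (m : ℝ) ∨
      (μ (cyl s \ A)).toReal / (μ (cyl s)).toReal < ε / (m : ℝ)) ∧
    ∀ r : ℕ, m < r → |phi μ r (A ∩ cyl s)| / (μ (cyl s)).toReal < ε / (r : ℝ)

/-- `A` is `(m,t,ε)`-balanced. -/
def BalancedAtT (μ : Measure Cantor) (m t : ℕ) (ε : ℝ) (A : Set Cantor) : Prop :=
  ∀ s : Fin m → Bool,
    ((μ (A ∩ cyl s)).toReal / (μ (cyl s)).toReal < ε / (m : ℝ) ∨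
      (μ (cyl s \ A)).toReal / (μ (cyl s)).toReal < ε / (m : ℝ)) ∧
    ∀ r : ℕ, m < r → r ≤ t → |phi μ r (A ∩ cyl s)| / (μ (cyl s)).toReal < ε / (r : ℝ)

lemma cyl_meas {m : ℕ} (s : Fin m → Bool) : MeasurableSet (cyl s) := by
  have h : cyl s = ⋂ i : Fin m, (fun x : Cantor => x i.1) ⁻¹' {s i} := by
    ext x; simp [cyl]
  rw [h]
  exact MeasurableSet.iInter fun i =>
    (measurable_pi_apply i.1) (measurableSet_singleton (s i))

lemma cyl_disj {m : ℕ} : Pairwise (Function.onFun Disjoint fun s : Fin m → Bool => cyl s) := by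
  intro s s' hss
  rw [Function.onFun, Set.disjoint_left]
  intro x hx hx'
  exact hss (funext fun i => (hx i).symm.trans (hx' i))

lemma cyl_union {m : ℕ} : ⋃ s : Fin m → Bool, cyl s = Set.univ := by
  ext x
  simp only [Set.mem_iUnion, Set.mem_univ, iff_true]
  exact ⟨fun i => x i.1, fun i => rfl⟩

lemma sum_cyl (μ : Measure Cantor) (A : Set Cantor) (hA : MeasurableSet A) (m : ℕ) :
    μ A = ∑ s : Fin m → Bool, μ (A ∩ cyl s) := by
  have h : A = ⋃ s : Fin m → Bool, A ∩ cyl s := by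
    rw [← Set.inter_iUnion, cyl_union, Set.inter_univ]
  conv_lhs => rw [h]
  rw [measure_iUnion (f := fun s : Fin m → Bool => A ∩ cyl s)
    (fun s s' h => ((cyl_disj h).mono inf_le_right inf_le_right))
    (fun s => hA.inter (cyl_meas s)), tsum_fintype]

/-- In a finite `(t,ε)`-balanced Boolean subalgebra of `Bor(C)`, where
`ε = (1/100)·inf{λ(A) : A ∈ 𝔽, λ(A) > 0}`, every element of positive measure
almost fills some cylinder of length `t`. -/
theorem stmt5 (μ : Measure Cantor) [IsProbabilityMeasure μ] (hμ : IsHaar μ)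
    (F : Set (Set Cantor)) (hfin : F.Finite)
    (huniv : Set.univ ∈ F) (hcompl : ∀ A ∈ F, Aᶜ ∈ F)
    (hunion : ∀ A ∈ F, ∀ B ∈ F, A ∪ B ∈ F)
    (hmeas : ∀ A ∈ F, MeasurableSet A)
    (t : ℕ) (ht : 0 < t) (ε : ℝ)
    (hε : ε = (1 / 100) * sInf ((fun A => (μ A).toReal) '' {A ∈ F | 0 < (μ A).toReal}))
    (hbal : ∀ A ∈ F, BalancedAt μ t ε A) :
    ∀ A ∈ F, 0 < (μ A).toReal → ∃ s : Fin t → Bool,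
      (0.99 : ℝ) ≤ (μ (A ∩ cyl s)).toReal / (μ (cyl s)).toReal := by
  intro A hAF hApos
  set c : ℝ := ((2 : ℝ≥0∞)⁻¹ ^ t).toReal with hc
  have hcval : c = (1 / 2 : ℝ) ^ t := by
    rw [hc, ENNReal.toReal_pow, ENNReal.toReal_inv]; norm_num
  have hcpos : 0 < c := by rw [hcval]; positivity
  have hcylR : ∀ s : Fin t → Bool, (μ (cyl s)).toReal = c := fun s => by rw [hμ t s]
  -- bounds on ε
  have hmem : (μ A).toReal ∈ ((fun A => (μ A).toReal) '' {A ∈ F | 0 < (μ A).toReal}) :=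
    ⟨A, ⟨hAF, hApos⟩, rfl⟩
  have hbdd : BddBelow ((fun A => (μ A).toReal) '' {A ∈ F | 0 < (μ A).toReal}) :=
    ⟨0, fun x ⟨B, _, hB⟩ => hB ▸ ENNReal.toReal_nonneg⟩
  have hεle : ε ≤ (1 / 100) * (μ A).toReal := by
    rw [hε]
    have := csInf_le hbdd hmem
    linarith
  have hεnn : 0 ≤ ε := by
    rw [hε]
    have : (0 : ℝ) ≤ sInf ((fun A => (μ A).toReal) '' {A ∈ F | 0 < (μ A).toReal}) :=
      le_csInf ⟨_, hmem⟩ (fun x ⟨B, _, hB⟩ => hB ▸ ENNReal.toReal_nonneg)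
    linarith
  have hμA1 : (μ A).toReal ≤ 1 := by
    have := ENNReal.toReal_mono (by simp) (prob_le_one (μ := μ) (s := A))
    simpa using this
  have ht1 : (1 : ℝ) ≤ t := by exact_mod_cast ht
  have hεt : ε / t ≤ 1 / 100 := by
    have h1 : ε / t ≤ ε := div_le_self hεnn ht1
    linarith
  have hAm : MeasurableSet A := hmeas A hAF
  -- existence of a cylinder where the complement is small
  have hex : ∃ s : Fin t → Bool, (μ (cyl s \ A)).toReal / (μ (cyl s)).toReal < ε / t := by
    by_contra hno
    push_neg at hno
    have hsmall : ∀ s : Fin t → Bool, (μ (A ∩ cyl s)).toReal < (ε / t) * c := by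
      intro s
      rcases (hbal A hAF s).1 with h | h
      · rw [hcylR s] at h; exact (div_lt_iff₀ hcpos).mp h
      · exact absurd h (not_lt.mpr (hno s))
    have hsum : (μ A).toReal = ∑ s : Fin t → Bool, (μ (A ∩ cyl s)).toReal := by
      rw [sum_cyl μ A hAm t, ENNReal.toReal_sum (fun s _ => measure_ne_top μ _)]
    have hlt : (μ A).toReal < ∑ _s : Fin t → Bool, (ε / t) * c := by
      rw [hsum]
      exact Finset.sum_lt_sum_of_nonempty Finset.univ_nonempty (fun s _ => hsmall s)
    have hcard : ∑ _s : Fin t → Bool, (ε / t) * c = (2 : ℝ) ^ t * ((ε / t) * c) := by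
      rw [Finset.sum_const, Finset.card_univ, Fintype.card_fun]
      simp [nsmul_eq_mul]
    have hpow : (2 : ℝ) ^ t * c = 1 := by
      rw [hcval]; rw [div_pow, ← mul_div_assoc, one_pow]
      field_simp
    have : (μ A).toReal < ε / t := by
      rw [hcard] at hlt
      calc (μ A).toReal < (2 : ℝ) ^ t * ((ε / t) * c) := hlt
        _ = (ε / t) * ((2 : ℝ) ^ t * c) := by ring
        _ = ε / t := by rw [hpow, mul_one]
    have h2 : ε / t ≤ ε := div_le_self hεnn ht1
    linarith
  obtain ⟨s, hs⟩ := hex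
  refine ⟨s, ?_⟩
  have hsplit : c = (μ (A ∩ cyl s)).toReal + (μ (cyl s \ A)).toReal := by
    rw [← hcylR s, ← ENNReal.toReal_add (measure_ne_top μ _) (measure_ne_top μ _),
      Set.inter_comm A (cyl s), measure_inter_add_diff (cyl s) hAm]
  rw [hcylR s] at hs ⊢
  have hd : (μ (cyl s \ A)).toReal < (ε / t) * c := (div_lt_iff₀ hcpos).mp hs
  rw [le_div_iff₀ hcpos]
  have : (ε / t) * c ≤ (1 / 100) * c :=
    mul_le_mul_of_nonneg_right hεt (le_of_lt hcpos)
  nlinarith [hd, hsplit, hcpos]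
end
end

section
/- Let ℍ₀ be a Boolean subalgebra of Bor(C) all of whose elements are (n,ε)-balanced. Then every element of the Boolean algebra ℍ generated by ℍ₀ ∪ 𝔸_n is (n,ε)-balanced, where 𝔸_n is the finite algebra generated by the cylinders {⟨s⟩ : s ∈ {-1,1}^n}. -/
open MeasureTheory Set Filter Topology
open scoped ENNReal

noncomputable section

/-- The Boolean algebra of subsets of the Cantor set generated by a family `S`. -/
def genAlgebra (S : Set (Set Cantor)) : Set (Set Cantor) :=
  ⋂₀ {T : Set (Set Cantor) | S ⊆ T ∧ Set.univ ∈ T ∧ (∀ A ∈ T, Aᶜ ∈ T) ∧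
      ∀ A ∈ T, ∀ B ∈ T, A ∪ B ∈ T}

/-- If every element of a Boolean subalgebra `ℍ₀` of `Bor(C)` is `(n,ε)`-balanced,
then so is every element of the Boolean algebra generated by `ℍ₀ ∪ 𝔸_n`. -/
theorem stmt6 (μ : Measure Cantor) [IsProbabilityMeasure μ] (hμ : IsHaar μ)
    (H0 : Set (Set Cantor))
    (huniv : Set.univ ∈ H0) (hcompl : ∀ A ∈ H0, Aᶜ ∈ H0)
    (hunion : ∀ A ∈ H0, ∀ B ∈ H0, A ∪ B ∈ H0)
    (hmeas : ∀ A ∈ H0, MeasurableSet A)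
    (n : ℕ) (ε : ℝ)
    (hbal : ∀ A ∈ H0, BalancedAt μ n ε A) :
    ∀ A ∈ genAlgebra (H0 ∪ {A | ∃ s : Fin n → Bool, A = cyl s}),
      BalancedAt μ n ε A := by
  intro A hA
  have hempty : (∅ : Set Cantor) ∈ H0 := by
    have := hcompl _ huniv; simpa using this
  set T : Set (Set Cantor) :=
    {A | ∀ s : Fin n → Bool, ∃ B ∈ H0, A ∩ cyl s = B ∩ cyl s} with hTdef
  have hTmem : T ∈ {T : Set (Set Cantor) |
      (H0 ∪ {A | ∃ s : Fin n → Bool, A = cyl s}) ⊆ T ∧ Set.univ ∈ T ∧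
      (∀ A ∈ T, Aᶜ ∈ T) ∧ ∀ A ∈ T, ∀ B ∈ T, A ∪ B ∈ T} := by
    refine ⟨?_, ?_, ?_, ?_⟩
    · rintro A (hA0 | ⟨t, rfl⟩)
      · exact fun s => ⟨A, hA0, rfl⟩
      · intro s
        by_cases h : t = s
        · exact ⟨Set.univ, huniv, by subst h; simp⟩
        · refine ⟨∅, hempty, ?_⟩
          have : cyl t ∩ cyl s = ∅ := by
            ext x
            simp only [Set.mem_inter_iff, Set.mem_empty_iff_false, iff_false, not_and]
            intro hx1 hx2
            apply h
            funext i
            rw [← hx1 i, ← hx2 i]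
          simp [this]
    · exact fun s => ⟨Set.univ, huniv, rfl⟩
    · intro A hA s
      obtain ⟨B, hB, hAB⟩ := hA s
      have key : ∀ x, x ∈ cyl s → (x ∈ A ↔ x ∈ B) := by
        intro x hx
        constructor
        · intro h
          have : x ∈ B ∩ cyl s := hAB ▸ Set.mem_inter h hx
          exact this.1
        · intro h
          have : x ∈ A ∩ cyl s := hAB.symm ▸ Set.mem_inter h hx
          exact this.1
      refine ⟨Bᶜ, hcompl B hB, ?_⟩
      ext x
      simp only [Set.mem_inter_iff, Set.mem_compl_iff]
      constructor
      · rintro ⟨hxA, hxs⟩; exact ⟨fun hxB => hxA ((key x hxs).mpr hxB), hxs⟩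
      · rintro ⟨hxB, hxs⟩; exact ⟨fun hxA => hxB ((key x hxs).mp hxA), hxs⟩
    · intro A hA B hB s
      obtain ⟨A', hA', hAA⟩ := hA s
      obtain ⟨B', hB', hBB⟩ := hB s
      refine ⟨A' ∪ B', hunion A' hA' B' hB', ?_⟩
      rw [Set.union_inter_distrib_right, Set.union_inter_distrib_right, hAA, hBB]
  have hAT : A ∈ T := hA T hTmem
  intro s
  obtain ⟨B, hB, hAB⟩ := hAT s
  have key : ∀ x, x ∈ cyl s → (x ∈ A ↔ x ∈ B) := by
    intro x hx
    constructor
    · intro h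
      have : x ∈ B ∩ cyl s := hAB ▸ Set.mem_inter h hx
      exact this.1
    · intro h
      have : x ∈ A ∩ cyl s := hAB.symm ▸ Set.mem_inter h hx
      exact this.1
  have hdiff : cyl s \ A = cyl s \ B := by
    ext x
    simp only [Set.mem_diff]
    constructor
    · rintro ⟨hxs, hxA⟩; exact ⟨hxs, fun hxB => hxA ((key x hxs).mpr hxB)⟩
    · rintro ⟨hxs, hxB⟩; exact ⟨hxs, fun hxA => hxB ((key x hxs).mp hxA)⟩
  rw [hAB, hdiff]
  exact hbal B hB s
end
end

section
/- Let ℍ ⊆ Bor(C) be a finite Boolean subalgebra that is (n,ε)-balanced for some n ∈ ℕ and 0 < ε < 1/3. Then the map h_n : ℍ → 𝔸_n defined by h_n(A) = ⋃{⟨s⟩ : s ∈ {-1,1}^n, λ(⟨s⟩\A)/λ(⟨s⟩) < ε} is a homomorphism of Boolean algebras, and for every A ∈ ℍ, λ(A △ h_n(A)) < ε/n. -/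
open MeasureTheory Set Filter Topology
open scoped ENNReal

noncomputable section

/-- The approximation map `h_n : ℍ → 𝔸_n`,
`h_n(A) = ⋃{⟨s⟩ : λ(⟨s⟩ \ A)/λ(⟨s⟩) < ε}`. -/
def hmap (μ : Measure Cantor) (n : ℕ) (ε : ℝ) (A : Set Cantor) : Set Cantor :=
  ⋃ s ∈ {s : Fin n → Bool | (μ (cyl s \ A)).toReal / (μ (cyl s)).toReal < ε}, cyl s

/-!
Condition on the cylinders of length `n`. Balance says that under each conditional measure
`μ[|⟨s⟩]` either `A` or `Aᶜ` has measure below `δ = ε / n`; as `δ ≤ ε < 1 / 3`, the thresholds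
`δ` and `ε` then select the same cylinders, so `h_n` commutes with unions and complements
cylinder by cylinder. On `⟨s⟩` the set `A △ h_n(A)` is `A ∩ ⟨s⟩` or `Aᶜ ∩ ⟨s⟩`, whichever has
conditional measure below `δ`, and the law of total probability sums these bounds to `δ`.
-/

open ProbabilityTheory

section Dichotomy

variable {α : Type*} [MeasurableSpace α] {ν : Measure α} {A B : Set α} {δ ε : ℝ}

lemma measureReal_lt_of_lt_or_of_le_compl (hAδ : ν.real A < δ ∨ ν.real Aᶜ < δ) (hδ : δ ≤ ε)
    (h : ε ≤ ν.real Aᶜ) : ν.real A < δ :=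
  hAδ.resolve_right fun h' => by linarith

variable [IsProbabilityMeasure ν]

lemma measureReal_compl_lt_of_lt_or (hA : MeasurableSet A) (hAδ : ν.real A < δ ∨ ν.real Aᶜ < δ)
    (hεδ : ε + δ ≤ 1) (h : ν.real Aᶜ < ε) : ν.real Aᶜ < δ := by
  rw [probReal_compl_eq_one_sub hA] at h ⊢
  rcases hAδ with hA' | hA' <;> linarith [probReal_compl_eq_one_sub (μ := ν) hA]

lemma measureReal_lt_iff_le_measureReal_compl (hA : MeasurableSet A)
    (hAδ : ν.real A < δ ∨ ν.real Aᶜ < δ) (hδ : δ ≤ ε) (hε : 2 * ε ≤ 1) :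
    ν.real A < ε ↔ ε ≤ ν.real Aᶜ := by
  refine ⟨fun h => ?_, fun h => (measureReal_lt_of_lt_or_of_le_compl hAδ hδ h).trans_le hδ⟩
  rw [probReal_compl_eq_one_sub hA]
  linarith

lemma measureReal_compl_union_lt_iff (hA : MeasurableSet A) (hB : MeasurableSet B)
    (hAδ : ν.real A < δ ∨ ν.real Aᶜ < δ) (hBδ : ν.real B < δ ∨ ν.real Bᶜ < δ)
    (hδ : δ ≤ ε) (hε : ε + 2 * δ ≤ 1) :
    ν.real (A ∪ B)ᶜ < ε ↔ ν.real Aᶜ < ε ∨ ν.real Bᶜ < ε := by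
  refine ⟨fun h => ?_, ?_⟩
  · by_contra! hAB
    have hA' := measureReal_lt_of_lt_or_of_le_compl hAδ hδ hAB.1
    have hB' := measureReal_lt_of_lt_or_of_le_compl hBδ hδ hAB.2
    rw [probReal_compl_eq_one_sub (hA.union hB)] at h
    linarith [measureReal_union_le (μ := ν) A B]
  · rintro (h | h)
    · exact (measureReal_mono (compl_subset_compl.2 subset_union_left)).trans_lt h
    · exact (measureReal_mono (compl_subset_compl.2 subset_union_right)).trans_lt h

end Dichotomy

lemma cond_symmDiff_of_subset {Ω : Type*} [MeasurableSpace Ω] {μ : Measure Ω} {c E : Set Ω}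
    (hc : MeasurableSet c) (h : c ⊆ E) (A : Set Ω) : μ[symmDiff A E | c] = μ[Aᶜ | c] := by
  rw [← cond_inter_self hc, ← cond_inter_self hc Aᶜ]
  congr 1
  ext x
  have := @h x
  simp only [mem_inter_iff, mem_symmDiff, mem_compl_iff]
  tauto

lemma cond_symmDiff_of_disjoint {Ω : Type*} [MeasurableSpace Ω] {μ : Measure Ω} {c E : Set Ω}
    (hc : MeasurableSet c) (h : Disjoint c E) (A : Set Ω) : μ[symmDiff A E | c] = μ[A | c] := by
  rw [← cond_inter_self hc, ← cond_inter_self hc A]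
  congr 1
  ext x
  have := @disjoint_left.1 h x
  simp only [mem_inter_iff, mem_symmDiff]
  tauto

section Cylinder

variable {μ : Measure Cantor} {n : ℕ} {s : Fin n → Bool} {A : Set Cantor} {x : Cantor} {ε : ℝ}

lemma cyl_eq_preimage (s : Fin n → Bool) : cyl s = (fun x (i : Fin n) => x i) ⁻¹' {s} := by
  ext x
  simp [cyl, funext_iff]

lemma mem_cyl_iff : x ∈ cyl s ↔ (fun i : Fin n => x i) = s := by
  rw [cyl_eq_preimage, mem_preimage, mem_singleton_iff]

lemma measurableSet_cyl (s : Fin n → Bool) : MeasurableSet (cyl s) := by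
  rw [cyl_eq_preimage]
  exact (measurable_pi_lambda _ fun i => measurable_pi_apply _) (measurableSet_singleton s)

lemma measureReal_cond_cyl (A : Set Cantor) :
    (μ[|cyl s]).real A = (μ (A ∩ cyl s)).toReal / (μ (cyl s)).toReal := by
  rw [measureReal_def, cond_apply (measurableSet_cyl s), ENNReal.toReal_mul,
    ENNReal.toReal_inv, inter_comm, div_eq_inv_mul]

lemma mem_hmap_iff : x ∈ hmap μ n ε A ↔ (μ[|cyl (fun i : Fin n => x i)]).real Aᶜ < ε := by
  simp only [hmap, mem_iUnion, mem_ofPred_eq, exists_prop, mem_cyl_iff, exists_eq_right',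
    measureReal_cond_cyl, ← sdiff_eq_compl_inter]

lemma hmap_univ (hε : 0 < ε) : hmap μ n ε univ = univ :=
  eq_univ_of_forall fun x => mem_hmap_iff.2 (by simpa using hε)

lemma cyl_subset_hmap (h : (μ[|cyl s]).real Aᶜ < ε) : cyl s ⊆ hmap μ n ε A :=
  fun x hx => mem_hmap_iff.2 (by rwa [mem_cyl_iff.1 hx])

lemma disjoint_cyl_hmap (h : ¬(μ[|cyl s]).real Aᶜ < ε) : Disjoint (cyl s) (hmap μ n ε A) :=
  disjoint_left.2 fun x hx hx' => h (by rwa [← mem_cyl_iff.1 hx, ← mem_hmap_iff])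

lemma BalancedAt.cond_lt_or (h : BalancedAt μ n ε A) (s : Fin n → Bool) :
    (μ[|cyl s]).real A < ε / n ∨ (μ[|cyl s]).real Aᶜ < ε / n := by
  simpa only [measureReal_cond_cyl, ← sdiff_eq_compl_inter] using (h s).1

end Cylinder

lemma measureReal_eq_sum_cyl {μ : Measure Cantor} [IsFiniteMeasure μ] (n : ℕ) (D : Set Cantor) :
    μ.real D = ∑ s : Fin n → Bool, μ.real (cyl s) * (μ[|cyl s]).real D := by
  have h := congrArg (fun ν : Measure Cantor => ν.real D)
    (sum_meas_smul_cond_fiber (X := fun x (i : Fin n) => x i)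
      (measurable_pi_lambda _ fun i => measurable_pi_apply _) μ)
  simp only [← cyl_eq_preimage] at h
  rw [← h, measureReal_def, Measure.coe_finsetSum, Finset.sum_apply, ENNReal.toReal_sum]
  · simp only [Measure.coe_smul, Pi.smul_apply, smul_eq_mul, ENNReal.toReal_mul, measureReal_def]
  · exact fun s _ => ENNReal.mul_ne_top (measure_ne_top _ _) (measure_ne_top _ _)

section Hmap

variable {μ : Measure Cantor} [IsFiniteMeasure μ] {n : ℕ} {A B : Set Cantor} {δ ε : ℝ}

lemma hmap_union (hcyl : ∀ s : Fin n → Bool, μ (cyl s) ≠ 0)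
    (hA : MeasurableSet A) (hB : MeasurableSet B)
    (hAδ : ∀ s : Fin n → Bool, (μ[|cyl s]).real A < δ ∨ (μ[|cyl s]).real Aᶜ < δ)
    (hBδ : ∀ s : Fin n → Bool, (μ[|cyl s]).real B < δ ∨ (μ[|cyl s]).real Bᶜ < δ)
    (hδ : δ ≤ ε) (hε : ε + 2 * δ ≤ 1) :
    hmap μ n ε (A ∪ B) = hmap μ n ε A ∪ hmap μ n ε B := by
  ext x
  have := cond_isProbabilityMeasure (hcyl fun i : Fin n => x i)
  simp only [mem_union, mem_hmap_iff]
  exact measureReal_compl_union_lt_iff hA hB (hAδ _) (hBδ _) hδ hε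

lemma hmap_compl (hcyl : ∀ s : Fin n → Bool, μ (cyl s) ≠ 0) (hA : MeasurableSet A)
    (hAδ : ∀ s : Fin n → Bool, (μ[|cyl s]).real A < δ ∨ (μ[|cyl s]).real Aᶜ < δ)
    (hδ : δ ≤ ε) (hε : 2 * ε ≤ 1) :
    hmap μ n ε Aᶜ = (hmap μ n ε A)ᶜ := by
  ext x
  have := cond_isProbabilityMeasure (hcyl fun i : Fin n => x i)
  simp only [mem_compl_iff, mem_hmap_iff, compl_compl, not_lt]
  exact measureReal_lt_iff_le_measureReal_compl hA (hAδ _) hδ hε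

lemma measureReal_cond_symmDiff_hmap_lt (hcyl : ∀ s : Fin n → Bool, μ (cyl s) ≠ 0)
    (hA : MeasurableSet A)
    (hAδ : ∀ s : Fin n → Bool, (μ[|cyl s]).real A < δ ∨ (μ[|cyl s]).real Aᶜ < δ)
    (hδ : δ ≤ ε) (hε : ε + δ ≤ 1) (s : Fin n → Bool) :
    (μ[|cyl s]).real (symmDiff A (hmap μ n ε A)) < δ := by
  have := cond_isProbabilityMeasure (hcyl s)
  by_cases h : (μ[|cyl s]).real Aᶜ < ε
  · rw [measureReal_def, cond_symmDiff_of_subset (measurableSet_cyl s) (cyl_subset_hmap h)]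
    exact measureReal_compl_lt_of_lt_or hA (hAδ s) hε h
  · rw [measureReal_def, cond_symmDiff_of_disjoint (measurableSet_cyl s) (disjoint_cyl_hmap h)]
    exact measureReal_lt_of_lt_or_of_le_compl (hAδ s) hδ (not_lt.1 h)

lemma measureReal_symmDiff_hmap_lt (hcyl : ∀ s : Fin n → Bool, μ (cyl s) ≠ 0)
    (hA : MeasurableSet A)
    (hAδ : ∀ s : Fin n → Bool, (μ[|cyl s]).real A < δ ∨ (μ[|cyl s]).real Aᶜ < δ)
    (hδ : δ ≤ ε) (hε : ε + δ ≤ 1) :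
    μ.real (symmDiff A (hmap μ n ε A)) < δ * μ.real univ := by
  have hpos (s : Fin n → Bool) : 0 < μ.real (cyl s) :=
    ENNReal.toReal_pos (hcyl s) (measure_ne_top μ _)
  calc μ.real (symmDiff A (hmap μ n ε A))
      = ∑ s : Fin n → Bool, μ.real (cyl s) * (μ[|cyl s]).real (symmDiff A (hmap μ n ε A)) :=
        measureReal_eq_sum_cyl n _
    _ < ∑ s : Fin n → Bool, μ.real (cyl s) * δ :=
        Finset.sum_lt_sum_of_nonempty Finset.univ_nonempty fun s _ =>
          mul_lt_mul_of_pos_left (measureReal_cond_symmDiff_hmap_lt hcyl hA hAδ hδ hε s) (hpos s)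
    _ = δ * μ.real univ := by
        rw [measureReal_eq_sum_cyl n univ, Finset.mul_sum]
        refine Finset.sum_congr rfl fun s _ => ?_
        have := cond_isProbabilityMeasure (hcyl s)
        rw [probReal_univ, mul_one, mul_comm]

end Hmap

theorem stmt7_general (μ : Measure Cantor) [IsProbabilityMeasure μ] (hμ : IsHaar μ)
    (H : Set (Set Cantor))
    (hmeas : ∀ A ∈ H, MeasurableSet A)
    (n : ℕ) (hn : 0 < n) (ε : ℝ) (hε0 : 0 < ε) (hε : ε < 1 / 3)
    (hbal : ∀ A ∈ H, BalancedAt μ n ε A) :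
    hmap μ n ε Set.univ = Set.univ ∧
    (∀ A ∈ H, ∀ B ∈ H, hmap μ n ε (A ∪ B) = hmap μ n ε A ∪ hmap μ n ε B) ∧
    (∀ A ∈ H, hmap μ n ε Aᶜ = (hmap μ n ε A)ᶜ) ∧
    (∀ A ∈ H, (μ (symmDiff A (hmap μ n ε A))).toReal < ε / n) := by
  have hcyl (s : Fin n → Bool) : μ (cyl s) ≠ 0 := by simp [hμ n s]
  have hδ : ε / n ≤ ε := div_le_self hε0.le (by exact_mod_cast hn)
  refine ⟨hmap_univ hε0, fun A hA B hB => ?_, fun A hA => ?_, fun A hA => ?_⟩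
  · exact hmap_union hcyl (hmeas A hA) (hmeas B hB) (hbal A hA).cond_lt_or
      (hbal B hB).cond_lt_or hδ (by linarith)
  · exact hmap_compl hcyl (hmeas A hA) (hbal A hA).cond_lt_or hδ (by linarith)
  · have := measureReal_symmDiff_hmap_lt hcyl (hmeas A hA) (hbal A hA).cond_lt_or hδ
      (by linarith)
    rwa [probReal_univ, mul_one] at this

/-- On a finite `(n,ε)`-balanced subalgebra (with `0 < ε < 1/3`), `h_n` is a Boolean
homomorphism into `𝔸_n` and `λ(A △ h_n(A)) < ε/n` for every `A` in the algebra. -/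
theorem stmt7 (μ : Measure Cantor) [IsProbabilityMeasure μ] (hμ : IsHaar μ)
    (H : Set (Set Cantor)) (hfin : H.Finite)
    (huniv : Set.univ ∈ H) (hcompl : ∀ A ∈ H, Aᶜ ∈ H)
    (hunion : ∀ A ∈ H, ∀ B ∈ H, A ∪ B ∈ H)
    (hmeas : ∀ A ∈ H, MeasurableSet A)
    (n : ℕ) (hn : 0 < n) (ε : ℝ) (hε0 : 0 < ε) (hε : ε < 1 / 3)
    (hbal : ∀ A ∈ H, BalancedAt μ n ε A) :
    hmap μ n ε Set.univ = Set.univ ∧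
    (∀ A ∈ H, ∀ B ∈ H, hmap μ n ε (A ∪ B) = hmap μ n ε A ∪ hmap μ n ε B) ∧
    (∀ A ∈ H, hmap μ n ε Aᶜ = (hmap μ n ε A)ᶜ) ∧
    (∀ A ∈ H, (μ (symmDiff A (hmap μ n ε A))).toReal < ε / n) :=
  stmt7_general μ hμ H hmeas n hn ε hε0 hε hbal
end
end

section
/- Let n ∈ ℕ and let λ_n be the uniform probability measure on {-1,1}^n. Then for every (d_1,…,d_n) ∈ ℝ^n and every ξ ∈ (0,1): λ_n({y ∈ {-1,1}^n : |Σ_{m=1}^n y_m d_m|² ≥ ξ·Σ_{m=1}^n d_m²}) ≥ (1/3)(1−ξ)². -/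
open Finset

/-! Paley–Zygmund for the uniform measure on sign vectors. For `Z = S²`, `S` the Rademacher sum,
`E Z = Σ d²` and `E Z² ≤ 3 (Σ d²)²`, both by induction on `n` after splitting off the first sign.
The `y` with `Z < ξ E Z` contribute at most `ξ E Z` to `E Z`, so `E[Z; Z ≥ ξ E Z] ≥ (1 - ξ) E Z`,
and Cauchy–Schwarz bounds the square of the left side by `E Z² · P(Z ≥ ξ E Z)`. -/

theorem sq_sum_sub_card_mul_le_card_filter_mul_sum_sq {α : Type*} (s : Finset α) (Z : α → ℝ)
    {t : ℝ} (ht : 0 ≤ t) (hmean : #s * t ≤ ∑ x ∈ s, Z x) :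
    (∑ x ∈ s, Z x - #s * t) ^ 2 ≤ #{x ∈ s | t ≤ Z x} * ∑ x ∈ s, Z x ^ 2 := by
  set A := {x ∈ s | t ≤ Z x}
  have hlow : ∑ x ∈ s.filter (¬t ≤ Z ·), Z x ≤ #s * t :=
    calc ∑ x ∈ s.filter (¬t ≤ Z ·), Z x ≤ ∑ _x ∈ s.filter (¬t ≤ Z ·), t :=
          sum_le_sum fun x hx => (not_le.mp (mem_filter.mp hx).2).le
      _ ≤ #s * t := by
          rw [sum_const, nsmul_eq_mul]
          exact mul_le_mul_of_nonneg_right (by exact_mod_cast card_filter_le _ _) ht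
  have htail : ∑ x ∈ s, Z x - #s * t ≤ ∑ x ∈ A, Z x := by
    rw [← sum_filter_add_sum_filter_not s (t ≤ Z ·)]
    linarith
  calc (∑ x ∈ s, Z x - #s * t) ^ 2 ≤ (∑ x ∈ A, Z x) ^ 2 :=
        pow_le_pow_left₀ (sub_nonneg.mpr hmean) htail 2
    _ ≤ #A * ∑ x ∈ A, Z x ^ 2 := sq_sum_le_card_mul_sum_sq
    _ ≤ #A * ∑ x ∈ s, Z x ^ 2 := by
        gcongr
        exact filter_subset _ _

noncomputable def rademacherSum {n : ℕ} (d : Fin n → ℝ) (y : Fin n → Bool) : ℝ :=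
  ∑ m, (if y m then 1 else -1) * d m

theorem sum_fin_succ_pi_bool {M : Type*} [AddCommMonoid M] {n : ℕ}
    (F : (Fin (n + 1) → Bool) → M) :
    ∑ y, F y = ∑ y, (F (Fin.cons true y) + F (Fin.cons false y)) := by
  rw [← (Fin.consEquiv fun _ => Bool).sum_comp, Fintype.sum_prod_type_right]
  simp [Fin.consEquiv]

theorem sum_rademacherSum_succ {n : ℕ} (d : Fin (n + 1) → ℝ) (f : ℝ → ℝ) :
    ∑ y, f (rademacherSum d y) =
      ∑ y, (f (d 0 + rademacherSum (Fin.tail d) y) + f (-d 0 + rademacherSum (Fin.tail d) y)) := by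
  rw [sum_fin_succ_pi_bool]
  simp [rademacherSum, Fin.sum_univ_succ, Fin.tail]

theorem card_fin_pi_bool (n : ℕ) : (Fintype.card (Fin n → Bool) : ℝ) = 2 ^ n := by
  simp

theorem sum_rademacherSum_sq {n : ℕ} (d : Fin n → ℝ) :
    ∑ y, rademacherSum d y ^ 2 = 2 ^ n * ∑ m, d m ^ 2 := by
  induction n with
  | zero => simp [rademacherSum]
  | succ n ih =>
    have hpair : ∀ x : ℝ, (d 0 + x) ^ 2 + (-d 0 + x) ^ 2 = 2 * d 0 ^ 2 + 2 * x ^ 2 := fun x => by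
      ring
    rw [sum_rademacherSum_succ d (· ^ 2)]
    simp only [hpair, sum_add_distrib, ← mul_sum, sum_const, card_univ, nsmul_eq_mul,
      card_fin_pi_bool, ih, Fin.sum_univ_succ (fun m => d m ^ 2)]
    simp only [Fin.tail]
    ring

theorem sum_rademacherSum_pow_four_le {n : ℕ} (d : Fin n → ℝ) :
    ∑ y, rademacherSum d y ^ 4 ≤ 3 * 2 ^ n * (∑ m, d m ^ 2) ^ 2 := by
  induction n with
  | zero => simp [rademacherSum]
  | succ n ih =>
    have hpair : ∀ x : ℝ, (d 0 + x) ^ 4 + (-d 0 + x) ^ 4 =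
        2 * d 0 ^ 4 + 12 * d 0 ^ 2 * x ^ 2 + 2 * x ^ 4 := fun x => by
      ring
    rw [sum_rademacherSum_succ d (· ^ 4)]
    simp only [hpair, sum_add_distrib, ← mul_sum, sum_const, card_univ, nsmul_eq_mul,
      card_fin_pi_bool, sum_rademacherSum_sq, Fin.sum_univ_succ (fun m => d m ^ 2)]
    have hd0 : (0 : ℝ) ≤ 2 ^ n * d 0 ^ 4 := by positivity
    have := ih (Fin.tail d)
    simp only [Fin.tail] at this ⊢
    rw [pow_succ (2 : ℝ) n]
    linarith

/-- Anticoncentration for Rademacher sums: with respect to the uniform probability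
measure on `{-1,1}^n`, the set of signs `y` with `|Σ y_m d_m|² ≥ ξ·Σ d_m²` has
probability at least `(1/3)(1-ξ)²`. -/
theorem stmt10 (n : ℕ) (d : Fin n → ℝ) (ξ : ℝ) (hξ0 : 0 < ξ) (hξ1 : ξ < 1) :
    (1 / 3) * (1 - ξ) ^ 2 ≤
      (Nat.card {y : Fin n → Bool //
          ξ * ∑ m, (d m) ^ 2 ≤ (∑ m, (if y m then (1 : ℝ) else -1) * d m) ^ 2} : ℝ)
        / 2 ^ n := by
  set D := ∑ m, d m ^ 2
  set A : Finset (Fin n → Bool) := {y | ξ * D ≤ rademacherSum d y ^ 2}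
  have hcard : Nat.card {y : Fin n → Bool //
      ξ * D ≤ (∑ m, (if y m then (1 : ℝ) else -1) * d m) ^ 2} = #A := by
    rw [Nat.card_eq_fintype_card, Fintype.card_subtype]
    rfl
  rw [hcard, le_div_iff₀ (by positivity)]
  have hD0 : 0 ≤ D := by positivity
  rcases hD0.eq_or_lt with hD | hD
  · have hA : A = univ := filter_true_of_mem fun y _ => by
      rw [← hD, mul_zero]
      exact sq_nonneg _
    rw [hA, card_univ, card_fin_pi_bool]
    have : (1 - ξ) ^ 2 ≤ 1 := by nlinarith
    nlinarith [pow_pos (two_pos : (0 : ℝ) < 2) n]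
  · have hPZ := sq_sum_sub_card_mul_le_card_filter_mul_sum_sq univ
      (fun y => rademacherSum d y ^ 2) (t := ξ * D) (by positivity) (by
        rw [card_univ, card_fin_pi_bool, sum_rademacherSum_sq]
        exact mul_le_mul_of_nonneg_left (by nlinarith) (by positivity))
    have h4 : ∑ y, (rademacherSum d y ^ 2) ^ 2 ≤ 3 * 2 ^ n * D ^ 2 := by
      simpa only [← pow_mul] using sum_rademacherSum_pow_four_le d
    rw [card_univ, card_fin_pi_bool, sum_rademacherSum_sq] at hPZ
    have hscaled : (2 ^ n * D) * (2 ^ n * (1 - ξ) ^ 2 * D) ≤ (2 ^ n * D) * (3 * #A * D) :=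
      calc (2 ^ n * D) * (2 ^ n * (1 - ξ) ^ 2 * D) = (2 ^ n * D - 2 ^ n * (ξ * D)) ^ 2 := by ring
        _ ≤ #A * ∑ y, (rademacherSum d y ^ 2) ^ 2 := hPZ
        _ ≤ #A * (3 * 2 ^ n * D ^ 2) := by gcongr
        _ = (2 ^ n * D) * (3 * #A * D) := by ring
    have := le_of_mul_le_mul_right (le_of_mul_le_mul_left hscaled (by positivity)) hD
    linarith
end

section
/- Let (ν̃_n) be a sequence of Radon measures on the Stone space of a Boolean algebra 𝔹, bounded in norm, let (E_n) be pairwise disjoint Borel subsets of St(𝔹), and let P ∈ 𝔹 with E_n ∩ [P] = ∅ for all n. Let c, δ > 0. If |ν̃_n|(E_n) ≥ c for all n, then there exist a subsequence (ν_{n_k}) and pairwise disjoint V_k ∈ 𝔹 with V_k ∩ P = ∅ and |ν_{n_k}|(V_k) ≥ c − δ for all k. -/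
open MeasureTheory Set
open scoped ENNReal

/-!
The pieces `V_k` are built one at a time, keeping a clopen region `G ⊆ Pᶜ` still free, an infinite
set `S` of candidate indices and a budget `b > 0` with `μ_m (E_m \ G) + b ≤ δ` for `m ∈ S`. Inner
regularity gives compact `C_m ⊆ E_m ∩ G` with `μ_m C_m ≥ c - δ`; these are pairwise disjoint. Separate
`N` of them by disjoint clopens `W_i ⊆ G`, where `N b / 2 > M` bounds all the masses: every `m` then
has some `i` with `μ_m (E_m ∩ W_i) < b / 2`, so by pigeonhole a single `W_i` serves infinitely many
`m`. It is the next piece, those `m` the next candidates, and `b / 2` the next budget.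
-/

theorem exists_seq_of_forall_exists_rel {α : Type*} {p : α → Prop} {r : α → α → Prop} {a : α}
    (ha : p a) (h : ∀ x, p x → ∃ y, p y ∧ r x y) :
    ∃ f : ℕ → α, ∀ n, p (f n) ∧ r (f n) (f (n + 1)) := by
  choose! g hgp hgr using h
  have hp : ∀ n, p (g^[n] a) := fun n => by
    induction n with
    | zero => exact ha
    | succ n ih => rw [Function.iterate_succ_apply']; exact hgp _ ih
  exact ⟨fun n => g^[n] a, fun n => ⟨hp n, by
    simp only [Function.iterate_succ_apply']; exact hgr _ (hp n)⟩⟩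

theorem Set.pairwise_disjoint_of_subset_of_succ_subset_diff {α : Type*} {V G : ℕ → Set α}
    (hV : ∀ n, V n ⊆ G n) (hG : ∀ n, G (n + 1) ⊆ G n \ V n) :
    Pairwise (Function.onFun Disjoint V) := by
  have hanti : Antitone G := antitone_nat_of_succ_le fun n => (hG n).trans sdiff_subset
  refine (pairwise_disjoint_on V).2 fun m n hmn => ?_
  exact disjoint_sdiff_right.mono_right ((hV n).trans ((hanti hmn).trans (hG m)))

theorem Set.Infinite.exists_infinite_of_subset_iUnion {α ι : Type*} [Finite ι] {S : Set α}
    (hS : S.Infinite) {T : ι → Set α} (hST : S ⊆ ⋃ i, T i) : ∃ i, (T i).Infinite := by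
  by_contra! h
  exact hS ((finite_iUnion h).subset hST)

theorem MeasurableSet.exists_isCompact_tsub_le {K : Type*} [TopologicalSpace K]
    [MeasurableSpace K] {μ : Measure K} [μ.InnerRegularCompactLTTop] {E G : Set K}
    (hE : MeasurableSet E) (hG : MeasurableSet G) (hEG : μ (E ∩ G) ≠ ⊤) {b c d : ℝ≥0∞}
    (hb : b ≠ 0) (hc : c ≤ μ E) (hd : μ (E \ G) + b ≤ d) :
    ∃ C ⊆ E ∩ G, IsCompact C ∧ c - d ≤ μ C := by
  obtain ⟨C, hCEG, hC, hμC⟩ := (hE.inter hG).exists_isCompact_lt_add hEG hb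
  refine ⟨C, hCEG, hC, tsub_le_iff_right.2 ?_⟩
  calc c ≤ μ E := hc
    _ ≤ μ (E ∩ G) + μ (E \ G) := measure_le_inter_add_sdiff _ _ _
    _ ≤ μ C + (μ (E \ G) + b) := by rw [add_comm (μ (E \ G)), ← add_assoc]; gcongr
    _ ≤ μ C + d := by gcongr

section StoneSpace

variable {K : Type*} [TopologicalSpace K] [CompactSpace K] [T2Space K]
  [TotallyDisconnectedSpace K] [MeasurableSpace K]

theorem exists_isClopen_superset_infinite_measure_lt [OpensMeasurableSpace K]
    {ν : ℕ → Measure K} {M : ℝ≥0∞} (hM : M ≠ ⊤) (hνM : ∀ m, ν m univ ≤ M)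
    {S : Set ℕ} (hS : S.Infinite) {C : ℕ → Set K} (hC : ∀ m ∈ S, IsCompact (C m))
    (hCd : S.PairwiseDisjoint C) {G : Set K} (hG : IsClopen G) (hCG : ∀ m ∈ S, C m ⊆ G)
    {η : ℝ≥0∞} (hη : η ≠ 0) :
    ∃ k ∈ S, ∃ A, IsClopen A ∧ C k ⊆ A ∧ A ⊆ G ∧ {m ∈ S | ν m A < η}.Infinite := by
  obtain ⟨N, hN⟩ := ENNReal.exists_nat_mul_gt hη hM
  obtain ⟨F, hFS, rfl⟩ := hS.exists_subset_card_eq N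
  obtain ⟨W, hW, hCW, hWG, -, hWd⟩ := exists_clopen_partition_of_clopen_cover
    (Z := fun i : F => C i) (D := fun _ => G) (fun i => (hC i (hFS i.2)).isClosed)
    (fun _ => hG) (fun i => hCG i (hFS i.2))
    (fun i _ j _ hij => hCd (hFS i.2) (hFS j.2) (Subtype.val_injective.ne hij))
  have hsmall : ∀ m, ∃ i, ν m (W i) < η := fun m => by
    suffices ∑ i, ν m (W i) < ∑ _ : F, η from (Finset.exists_lt_of_sum_lt this).imp fun _ => And.right
    calc ∑ i, ν m (W i) ≤ ν m univ :=
          sum_measure_le_measure_univ (fun i _ => (hW i).isOpen.measurableSet.nullMeasurableSet)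
            fun i _ j _ hij => (hWd (mem_univ i) (mem_univ j) hij).aedisjoint
      _ ≤ M := hνM m
      _ < F.card * η := hN
      _ = ∑ _ : F, η := by simp
  choose i hi using hsmall
  obtain ⟨j, hj⟩ := hS.exists_infinite_of_subset_iUnion (T := fun j => {m ∈ S | ν m (W j) < η})
    fun m hm => mem_iUnion.2 ⟨i m, hm, hi m⟩
  exact ⟨j, hFS j.2, W j, hW j, hCW j, hWG j, hj⟩

structure PelczynskiStage (K : Type*) where
  idx : ℕ
  piece : Set K
  rest : Set K
  cand : Set ℕ
  budget : ℝ≥0∞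

namespace PelczynskiStage

variable (μ : ℕ → Measure K) (E : ℕ → Set K) (P : Set K) (c d : ℝ≥0∞)

/-- `rest` is the region still free for later pieces, and the indices in `cand` have lost at most
`d - budget` of their mass on `E m` outside it; the budget is halved at every stage. -/
structure Valid (s : PelczynskiStage K) : Prop where
  isClopen_rest : IsClopen s.rest
  disjoint_rest : Disjoint s.rest P
  infinite_cand : s.cand.Infinite
  budget_ne_zero : s.budget ≠ 0
  loss_add_budget_le : ∀ m ∈ s.cand, μ m (E m \ s.rest) + s.budget ≤ d

structure Next (s t : PelczynskiStage K) : Prop where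
  idx_lt : s.idx < t.idx
  isClopen_piece : IsClopen t.piece
  piece_subset : t.piece ⊆ s.rest
  rest_eq : t.rest = s.rest \ t.piece
  tsub_le_measure_piece : c - d ≤ μ t.idx t.piece

variable [BorelSpace K] {μ E P c d}

theorem exists_next [∀ n, (μ n).InnerRegularCompactLTTop] {M : ℝ≥0∞} (hM : M ≠ ⊤)
    (hμM : ∀ n, μ n univ ≤ M) (hE : ∀ n, MeasurableSet (E n))
    (hEd : Pairwise (Function.onFun Disjoint E)) (hc : ∀ n, c ≤ μ n (E n))
    {s : PelczynskiStage K} (hs : s.Valid μ E P d) :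
    ∃ t : PelczynskiStage K, t.Valid μ E P d ∧ s.Next μ c d t := by
  obtain ⟨hG, hGP, hS, hb, hloss⟩ := hs
  have hcompact : ∀ m ∈ s.cand, ∃ C ⊆ E m ∩ s.rest, IsCompact C ∧ c - d ≤ μ m C :=
    fun m hm => (hE m).exists_isCompact_tsub_le hG.isOpen.measurableSet
      (measure_ne_top_of_subset (subset_univ _) ((hμM m).trans_lt hM.lt_top).ne) hb (hc m)
      (hloss m hm)
  choose! C hCE hC hμC using hcompact
  obtain ⟨k, hk, A, hA, hCA, hAG, hsmall⟩ := exists_isClopen_superset_infinite_measure_lt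
    (ν := fun m => (μ m).restrict (E m)) hM
    (fun m => (Measure.restrict_apply_le _ _).trans (hμM m)) (hS.sdiff (finite_Iic s.idx))
    (fun m hm => hC m hm.1)
    (fun m hm n hn hmn => (hEd hmn).mono ((hCE m hm.1).trans inter_subset_left)
      ((hCE n hn.1).trans inter_subset_left))
    hG (fun m hm => (hCE m hm.1).trans inter_subset_right) (ENNReal.half_pos hb).ne'
  refine ⟨⟨k, A, s.rest \ A, {m ∈ s.cand \ Iic s.idx | μ m (A ∩ E m) < s.budget / 2},
    s.budget / 2⟩, ⟨hG.diff hA, hGP.mono_left sdiff_subset, ?_, (ENNReal.half_pos hb).ne', ?_⟩,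
    not_le.1 hk.2, hA, hAG, rfl, (hμC k hk.1).trans (measure_mono hCA)⟩
  · simpa only [Measure.restrict_apply hA.isOpen.measurableSet] using hsmall
  · rintro m ⟨hm, hmA⟩
    have hsplit : E m \ (s.rest \ A) ⊆ (E m \ s.rest) ∪ (A ∩ E m) := fun x ⟨hxE, hx⟩ => by
      by_cases hxA : x ∈ A
      · exact Or.inr ⟨hxA, hxE⟩
      · exact Or.inl ⟨hxE, fun hxG => hx ⟨hxG, hxA⟩⟩
    calc μ m (E m \ (s.rest \ A)) + s.budget / 2
        ≤ μ m (E m \ s.rest) + μ m (A ∩ E m) + s.budget / 2 := by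
          gcongr; exact (measure_mono hsplit).trans (measure_union_le _ _)
      _ ≤ μ m (E m \ s.rest) + (s.budget / 2 + s.budget / 2) := by
          rw [add_assoc]; gcongr
      _ ≤ d := by rw [ENNReal.add_halves]; exact hloss m hm.1

end PelczynskiStage

theorem exists_strictMono_pairwise_disjoint_isClopen_tsub_le [BorelSpace K] {μ : ℕ → Measure K}
    [∀ n, (μ n).InnerRegularCompactLTTop] {M : ℝ≥0∞} (hM : M ≠ ⊤) (hμM : ∀ n, μ n univ ≤ M)
    {E : ℕ → Set K} (hE : ∀ n, MeasurableSet (E n)) (hEd : Pairwise (Function.onFun Disjoint E))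
    {P : Set K} (hP : IsClopen P) (hEP : ∀ n, Disjoint (E n) P) {c d : ℝ≥0∞} (hd : d ≠ 0)
    (hc : ∀ n, c ≤ μ n (E n)) :
    ∃ (φ : ℕ → ℕ) (V : ℕ → Set K), StrictMono φ ∧ (∀ k, IsClopen (V k)) ∧
      Pairwise (Function.onFun Disjoint V) ∧ (∀ k, Disjoint (V k) P) ∧
      ∀ k, c - d ≤ μ (φ k) (V k) := by
  have hstart : PelczynskiStage.Valid μ E P d ⟨0, ∅, Pᶜ, univ, d⟩ :=
    ⟨hP.compl, disjoint_compl_left, infinite_univ, hd, fun m _ => by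
      simp [(hEP m).inter_eq]⟩
  obtain ⟨f, hf⟩ := exists_seq_of_forall_exists_rel hstart fun _ hs =>
    PelczynskiStage.exists_next hM hμM hE hEd hc hs
  refine ⟨fun k => (f (k + 1)).idx, fun k => (f (k + 1)).piece,
    strictMono_nat_of_lt_succ fun k => (hf (k + 1)).2.idx_lt, fun k => (hf k).2.isClopen_piece,
    ?_, fun k => (hf k).1.disjoint_rest.mono_left (hf k).2.piece_subset,
    fun k => (hf k).2.tsub_le_measure_piece⟩
  exact pairwise_disjoint_of_subset_of_succ_subset_diff (G := fun k => (f k).rest)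
    (fun k => (hf k).2.piece_subset) fun k => (hf k).2.rest_eq.le

end StoneSpace

theorem stmt16_general (K : Type) [TopologicalSpace K] [CompactSpace K] [T2Space K]
    [TotallyDisconnectedSpace K] [MeasurableSpace K] [BorelSpace K]
    (ν : ℕ → SignedMeasure K)
    (hreg : ∀ n, Measure.Regular ((ν n).totalVariation))
    (hbdd : ∃ M : ℝ≥0∞, M ≠ ⊤ ∧ ∀ n, (ν n).totalVariation Set.univ ≤ M)
    (E : ℕ → Set K) (hE : ∀ n, MeasurableSet (E n))
    (hEd : Pairwise (Function.onFun Disjoint E))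
    (P : Set K) (hP : IsClopen P) (hEP : ∀ n, Disjoint (E n) P)
    (c δ : ℝ) (hδ : 0 < δ)
    (hEc : ∀ n, ENNReal.ofReal c ≤ (ν n).totalVariation (E n)) :
    ∃ (φ : ℕ → ℕ) (V : ℕ → Set K), StrictMono φ ∧ (∀ k, IsClopen (V k)) ∧
      Pairwise (Function.onFun Disjoint V) ∧ (∀ k, Disjoint (V k) P) ∧
      ∀ k, ENNReal.ofReal (c - δ) ≤ (ν (φ k)).totalVariation (V k) := by
  obtain ⟨M, hM, hMν⟩ := hbdd
  simp only [ENNReal.ofReal_sub c hδ.le]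
  exact exists_strictMono_pairwise_disjoint_isClopen_tsub_le (μ := fun n => (ν n).totalVariation)
    hM hMν hE hEd hP hEP (ENNReal.ofReal_pos.2 hδ).ne' hEc

/-- Pełczyński-type lemma on the Stone space `K` of a Boolean algebra `𝔹` (elements
of `𝔹` = clopen subsets of `K`, measures on `𝔹` = Radon signed measures on `K`):
given a norm-bounded sequence of Radon measures `ν_n`, pairwise disjoint Borel sets
`E_n` disjoint from the clopen set `P` with `|ν_n|(E_n) ≥ c`, and `δ > 0`, there
exist a subsequence and pairwise disjoint clopen `V_k`, disjoint from `P`, with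
`|ν_{n_k}|(V_k) ≥ c − δ`. -/
theorem stmt16 (K : Type) [TopologicalSpace K] [CompactSpace K] [T2Space K]
    [TotallyDisconnectedSpace K] [MeasurableSpace K] [BorelSpace K]
    (ν : ℕ → SignedMeasure K)
    (hreg : ∀ n, Measure.Regular ((ν n).totalVariation))
    (hbdd : ∃ M : ℝ≥0∞, M ≠ ⊤ ∧ ∀ n, (ν n).totalVariation Set.univ ≤ M)
    (E : ℕ → Set K) (hE : ∀ n, MeasurableSet (E n))
    (hEd : Pairwise (Function.onFun Disjoint E))
    (P : Set K) (hP : IsClopen P) (hEP : ∀ n, Disjoint (E n) P)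
    (c δ : ℝ) (hc : 0 < c) (hδ : 0 < δ)
    (hEc : ∀ n, ENNReal.ofReal c ≤ (ν n).totalVariation (E n)) :
    ∃ (φ : ℕ → ℕ) (V : ℕ → Set K), StrictMono φ ∧ (∀ k, IsClopen (V k)) ∧
      Pairwise (Function.onFun Disjoint V) ∧ (∀ k, Disjoint (V k) P) ∧
      ∀ k, ENNReal.ofReal (c - δ) ≤ (ν (φ k)).totalVariation (V k) :=
  stmt16_general K ν hreg hbdd E hE hEd P hP hEP c δ hδ hEc
end
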